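/- arXiv:math/9809035 — 2 statements merged into one kernel-verified Lean document; each statement's English description precedes it below -/
import Mathlib

section
/- Let P ∈ 𝒫_{P₁} be a basis projection with P₁ - P Hilbert–Schmidt. Then P₁₁ = P₁PP₁ is a Fredholm operator on K₁ of index zero, ker P₁₁ is finite-dimensional, and T := P₂₁ P₁₁⁻¹ (with P₁₁⁻¹ the inverse on ran P₁₁ extended by 0 on ker P₁₁) is an antisymmetric Hilbert–Schmidt operator from K₁ to K₂, i.e. T^τ := (T*)‾ = -T. -/
open ContinuousLinearMap

/-- `T` is a Hilbert–Schmidt operator. -/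
def IsHS {K : Type*} [NormedAddCommGroup K] [InnerProductSpace ℂ K]
    (T : K →L[ℂ] K) : Prop :=
  ∃ (ι : Type) (b : HilbertBasis ι ℂ K), Summable fun i => ‖T (b i)‖ ^ 2

/-- The conjugate operator `Ā = J A J` of `A` with respect to the conjugation `J`. -/
noncomputable def conjOp {K : Type*} [NormedAddCommGroup K] [InnerProductSpace ℂ K]
    (J : K ≃ₗᵢ⋆[ℂ] K) (A : K →L[ℂ] K) : K →L[ℂ] K :=
  LinearMap.mkContinuous
    { toFun := fun f => J (A (J f))
      map_add' := by intro x y; simp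
      map_smul' := by intro c x; simp [map_smulₛₗ] }
    ‖A‖ fun f => by
      calc ‖J (A (J f))‖ = ‖A (J f)‖ := J.norm_map _
        _ ≤ ‖A‖ * ‖J f‖ := A.le_opNorm _
        _ = ‖A‖ * ‖f‖ := by rw [J.norm_map]

section Aux

open scoped ENNReal NNReal
local notation "⟪" x ", " y "⟫" => @inner ℂ _ _ x y

lemma ofReal_normsq {E : Type*} [NormedAddCommGroup E] (y : E) :
    ENNReal.ofReal (‖y‖^2) = (‖y‖₊ : ℝ≥0∞)^2 := by
  rw [ENNReal.ofReal_pow (norm_nonneg _), ← coe_nnnorm, ENNReal.ofReal_coe_nnreal]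

variable {K : Type*} [NormedAddCommGroup K] [InnerProductSpace ℂ K] [CompleteSpace K]

lemma parseval_real {ι : Type*} (c : HilbertBasis ι ℂ K) (x : K) :
    HasSum (fun j => (‖⟪c j, x⟫‖^2 : ℝ)) (‖x‖^2) := by
  have h := c.hasSum_inner_mul_inner x x
  have h2 := (Complex.reCLM : ℂ →L[ℝ] ℝ).hasSum h
  convert h2 using 2 with j
  · rw [← inner_conj_symm x (c j), ← Complex.normSq_eq_conj_mul_self]
    simp [Complex.normSq_eq_norm_sq, ← Complex.ofReal_pow]
  · rw [inner_self_eq_norm_sq_to_K (𝕜 := ℂ)]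
    simp [← Complex.ofReal_pow]

lemma parseval_ennreal {ι : Type*} (c : HilbertBasis ι ℂ K) (x : K) :
    (‖x‖₊ : ℝ≥0∞)^2 = ∑' j, (‖⟪c j, x⟫‖₊ : ℝ≥0∞)^2 := by
  have h := parseval_real c x
  have h1 : ENNReal.ofReal (‖x‖^2) = ∑' j, ENNReal.ofReal (‖⟪c j, x⟫‖^2) :=
    ENNReal.ofReal_tsum_of_nonneg (fun j => by positivity) h.summable ▸ by rw [h.tsum_eq]
  rw [← ofReal_normsq, h1]
  exact tsum_congr fun j => ofReal_normsq _

/-- The (possibly infinite) Hilbert–Schmidt norm squared w.r.t. a basis. -/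
noncomputable def eS {ι : Type*} (A : K →L[ℂ] K) (b : HilbertBasis ι ℂ K) : ℝ≥0∞ :=
  ∑' i, (‖A (b i)‖₊ : ℝ≥0∞)^2

lemma eS_adjoint {ι κ : Type*} (A : K →L[ℂ] K) (b : HilbertBasis ι ℂ K)
    (c : HilbertBasis κ ℂ K) : eS A b = eS (adjoint A) c := by
  unfold eS
  calc ∑' i, (‖A (b i)‖₊ : ℝ≥0∞)^2
      = ∑' i, ∑' j, (‖⟪c j, A (b i)⟫‖₊ : ℝ≥0∞)^2 := tsum_congr fun i => parseval_ennreal c _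
    _ = ∑' j, ∑' i, (‖⟪b i, adjoint A (c j)⟫‖₊ : ℝ≥0∞)^2 := by
        rw [ENNReal.tsum_comm]
        refine tsum_congr fun i => tsum_congr fun j => ?_
        rw [← adjoint_inner_left]
        congr 2
        exact NNReal.coe_injective (by simp [coe_nnnorm, ← norm_inner_symm])
    _ = ∑' j, (‖(adjoint A) (c j)‖₊ : ℝ≥0∞)^2 := tsum_congr fun j => (parseval_ennreal b _).symm

lemma summable_iff_eS {ι : Type*} (A : K →L[ℂ] K) (b : HilbertBasis ι ℂ K) :
    (Summable fun i => ‖A (b i)‖ ^ 2) ↔ eS A b ≠ ⊤ := by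
  have : (fun i => ‖A (b i)‖ ^ 2) = fun i => ((‖A (b i)‖₊^2 : ℝ≥0) : ℝ) := by
    funext i; push_cast; rfl
  rw [this, NNReal.summable_coe, ← ENNReal.tsum_coe_ne_top_iff_summable]
  unfold eS
  push_cast
  rfl

lemma eS_eq_eS {ι κ : Type*} (A : K →L[ℂ] K) (b : HilbertBasis ι ℂ K)
    (c : HilbertBasis κ ℂ K) : eS A b = eS A c := by
  rw [eS_adjoint A b c, eS_adjoint (adjoint A) c c, adjoint_adjoint]

lemma IsHS.eS_ne_top {A : K →L[ℂ] K} (h : IsHS A) {ι : Type*} (b : HilbertBasis ι ℂ K) :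
    eS A b ≠ ⊤ := by
  obtain ⟨ι', b', hs⟩ := h
  rw [eS_eq_eS A b b']
  exact (summable_iff_eS A b').mp hs

lemma isHS_of {A : K →L[ℂ] K} {ι : Type} (b : HilbertBasis ι ℂ K) (h : eS A b ≠ ⊤) :
    IsHS A := ⟨ι, b, (summable_iff_eS A b).mpr h⟩

lemma eS_comp_le {ι : Type*} (A B : K →L[ℂ] K) (b : HilbertBasis ι ℂ K) :
    eS (A ∘L B) b ≤ (‖A‖₊ : ℝ≥0∞)^2 * eS B b := by
  rw [eS, eS, ← ENNReal.tsum_mul_left]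
  refine ENNReal.tsum_le_tsum fun i => ?_
  rw [← mul_pow]
  gcongr
  calc (‖(A ∘L B) (b i)‖₊ : ℝ≥0∞) = ↑‖A (B (b i))‖₊ := rfl
    _ ≤ ↑(‖A‖₊ * ‖B (b i)‖₊) := by exact_mod_cast A.le_opNNNorm _
    _ = ↑‖A‖₊ * ↑‖B (b i)‖₊ := by push_cast; rfl

lemma IsHS.comp_left {C : K →L[ℂ] K} (h : IsHS C) (L : K →L[ℂ] K) : IsHS (L ∘L C) := by
  obtain ⟨ι, b, hs⟩ := h
  refine isHS_of b (ne_top_of_le_ne_top ?_ (eS_comp_le L C b))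
  exact ENNReal.mul_ne_top (by simp) ((summable_iff_eS C b).mp hs)

lemma IsHS.adj {C : K →L[ℂ] K} (h : IsHS C) : IsHS (adjoint C) := by
  obtain ⟨ι, b, hs⟩ := h
  refine isHS_of b ?_
  rw [← eS_adjoint C b b]
  exact (summable_iff_eS C b).mp hs

lemma IsHS.comp_right {C : K →L[ℂ] K} (h : IsHS C) (R : K →L[ℂ] K) : IsHS (C ∘L R) := by
  have := (h.adj.comp_left (ContinuousLinearMap.adjoint R)).adj
  rwa [← adjoint_comp, adjoint_adjoint] at this

lemma IsHS.neg {C : K →L[ℂ] K} (h : IsHS C) : IsHS (-C) := by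
  obtain ⟨ι, b, hs⟩ := h
  exact ⟨ι, b, by simpa using hs⟩

lemma IsHS.congr {C D : K →L[ℂ] K} (h : IsHS C) (e : C = D) : IsHS D := e ▸ h

end Aux

section ConjAux

variable {K : Type*} [NormedAddCommGroup K] [InnerProductSpace ℂ K]
variable (J : K ≃ₗᵢ⋆[ℂ] K)

lemma conjOp_apply (A : K →L[ℂ] K) (f : K) : conjOp J A f = J (A (J f)) := rfl

lemma conjOp_mul (hJ : ∀ f, J (J f) = f) (A B : K →L[ℂ] K) :
    conjOp J (A * B) = conjOp J A * conjOp J B := by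
  ext f
  simp [conjOp_apply, ContinuousLinearMap.mul_apply, hJ]

lemma conjOp_one (hJ : ∀ f, J (J f) = f) : conjOp J (1 : K →L[ℂ] K) = 1 := by
  ext f
  simp [conjOp_apply, hJ]

lemma conjOp_sub (A B : K →L[ℂ] K) : conjOp J (A - B) = conjOp J A - conjOp J B := by
  ext f
  simp [conjOp_apply]

lemma conjOp_neg (A : K →L[ℂ] K) : conjOp J (-A) = -(conjOp J A) := by
  ext f
  simp [conjOp_apply]

end ConjAux

/-- For a basis projection `P` with `P₁ - P` Hilbert–Schmidt: `P₁₁ = P₁PP₁` is Fredholm of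
index zero on `K₁`, `ker P₁₁` is finite-dimensional, and `T = P₂₁ P₁₁⁻¹` (with `Q` the
Moore–Penrose inverse of `P₁₁` supported on `K₁`) is an antisymmetric Hilbert–Schmidt
operator from `K₁` to `K₂`. -/
theorem stmt4 {K : Type*} [NormedAddCommGroup K] [InnerProductSpace ℂ K] [CompleteSpace K]
    (J : K ≃ₗᵢ⋆[ℂ] K) (hJ : ∀ f, J (J f) = f)
    (P₁ : K →L[ℂ] K) (hP₁sa : IsSelfAdjoint P₁) (hP₁idem : P₁ ∘L P₁ = P₁)
    (hP₁conj : conjOp J P₁ = 1 - P₁)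
    (P : K →L[ℂ] K) (hPsa : IsSelfAdjoint P) (hPidem : P ∘L P = P)
    (hPconj : conjOp J P = 1 - P) (hPHS : IsHS (P₁ - P))
    -- `Q` is the generalized (Moore–Penrose) inverse of `P₁₁ = P₁ P P₁`,
    -- i.e. the inverse of `P₁₁` on `ran P₁₁` extended by zero:
    (Q : K →L[ℂ] K)
    (hQ1 : (P₁ ∘L P ∘L P₁) ∘L Q ∘L (P₁ ∘L P ∘L P₁) = P₁ ∘L P ∘L P₁)
    (hQ2 : Q ∘L (P₁ ∘L P ∘L P₁) ∘L Q = Q)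
    (hQ3 : IsSelfAdjoint ((P₁ ∘L P ∘L P₁) ∘L Q))
    (hQ4 : IsSelfAdjoint (Q ∘L (P₁ ∘L P ∘L P₁)))
    (hQ5 : Q = P₁ ∘L Q ∘L P₁) :
    FiniteDimensional ℂ ↥(LinearMap.ker ((P₁ ∘L P ∘L P₁ : K →L[ℂ] K) : K →ₗ[ℂ] K) ⊓ LinearMap.range (P₁ : K →ₗ[ℂ] K)) ∧
      IsClosed ((Submodule.map ((P₁ ∘L P ∘L P₁ : K →L[ℂ] K) : K →ₗ[ℂ] K) (LinearMap.range (P₁ : K →ₗ[ℂ] K)) : Submodule ℂ K) : Set K) ∧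
      Module.rank ℂ ↥(LinearMap.ker ((P₁ ∘L P ∘L P₁ : K →L[ℂ] K) : K →ₗ[ℂ] K) ⊓ LinearMap.range (P₁ : K →ₗ[ℂ] K)) =
        Module.rank ℂ ↥((LinearMap.range ((P₁ ∘L P ∘L P₁ : K →L[ℂ] K) : K →ₗ[ℂ] K))ᗮ ⊓ LinearMap.range (P₁ : K →ₗ[ℂ] K)) ∧
      ((1 - P₁) ∘L P ∘L P₁) ∘L Q =
        (1 - P₁) ∘L (((1 - P₁) ∘L P ∘L P₁) ∘L Q) ∘L P₁ ∧
      conjOp J (adjoint (((1 - P₁) ∘L P ∘L P₁) ∘L Q)) = -(((1 - P₁) ∘L P ∘L P₁) ∘L Q) ∧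
      IsHS (((1 - P₁) ∘L P ∘L P₁) ∘L Q) := by
  classical
  simp only [← ContinuousLinearMap.mul_def] at hQ1 hQ2 hQ3 hQ4 hQ5 hP₁idem hPidem ⊢
  set A : K →L[ℂ] K := P₁ * (P * P₁) with hAdef
  set X : K →L[ℂ] K := (1 - P₁) * (P * P₁) with hXdef
  clear_value A X
  have sP₁ : star P₁ = P₁ := hP₁sa.star_eq
  have sP : star P = P := hPsa.star_eq
  have hadjP₁ : ContinuousLinearMap.adjoint P₁ = P₁ := hP₁sa.adjoint_eq
  have hadjP : ContinuousLinearMap.adjoint P = P := hPsa.adjoint_eq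
  have sA : star A = A := by
    rw [hAdef, star_mul, star_mul, sP₁, sP, mul_assoc]
  have hadjA : ContinuousLinearMap.adjoint A = A := by
    rw [← ContinuousLinearMap.star_eq_adjoint, sA]
  have hP₁A : P₁ * A = A := by rw [hAdef, ← mul_assoc, hP₁idem]
  have hAP₁ : A * P₁ = A := by rw [hAdef]; simp only [mul_assoc, hP₁idem]
  have hQP₁ : Q * P₁ = Q := by
    nth_rewrite 1 [hQ5]
    simp only [mul_assoc, hP₁idem]
    exact hQ5.symm
  have hP₁Q : P₁ * Q = Q := by
    nth_rewrite 1 [hQ5]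
    rw [← mul_assoc, hP₁idem]
    exact hQ5.symm
  have m1 : star (A * Q) = A * Q := hQ3.star_eq
  have m2 : star (Q * A) = Q * A := hQ4.star_eq
  have n1 : star Q * A = A * Q := by rw [← m1, star_mul, sA]
  have n2 : A * star Q = Q * A := by rw [← m2, star_mul, sA]
  have g2 : A * (A * Q) = A := by
    have hQ1' : (A * Q) * A = A := by rw [mul_assoc]; exact hQ1
    have h := congrArg star hQ1'
    rwa [star_mul, m1, sA] at h
  have hARA : A * (star Q * A) = A := by rw [n1]; exact g2
  have k2 : A * star Q = (A * Q) * (A * star Q) := by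
    conv_lhs => rw [← hQ1]
    simp only [mul_assoc]
  have k1 : A * Q = (Q * A) * (A * Q) := by
    calc A * Q = (A * (star Q * A)) * Q := by rw [hARA]
      _ = (A * star Q) * (A * Q) := by simp only [mul_assoc]
      _ = (Q * A) * (A * Q) := by rw [n2]
  have comm : A * Q = Q * A := by
    have h5 : A * Q = (A * Q) * (Q * A) := by
      calc A * Q = star (A * Q) := m1.symm
        _ = star ((Q * A) * (A * Q)) := by rw [← k1]
        _ = star (A * Q) * star (Q * A) := by rw [star_mul]
        _ = (A * Q) * (Q * A) := by rw [m1, m2]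
    calc A * Q = (A * Q) * (Q * A) := h5
      _ = (A * Q) * (A * star Q) := by rw [n2]
      _ = A * star Q := k2.symm
      _ = Q * A := n2
  have k2' : star Q * A = (star Q * A) * (Q * A) := by
    conv_lhs => rw [← hQ1]
    simp only [mul_assoc]
  have k1' : Q * A = (Q * A) * (A * Q) := by
    calc Q * A = Q * (A * (star Q * A)) := by rw [hARA]
      _ = (Q * A) * (star Q * A) := by simp only [mul_assoc]
      _ = (Q * A) * (A * Q) := by rw [n1]
  have comm' : Q * A = star Q * A := by
    calc Q * A = star (Q * A) := m2.symm
      _ = star ((Q * A) * (A * Q)) := by rw [← k1']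
      _ = star (A * Q) * star (Q * A) := by rw [star_mul]
      _ = (A * Q) * (Q * A) := by rw [m1, m2]
      _ = (star Q * A) * (Q * A) := by rw [n1]
      _ = star Q * A := k2'.symm
  have hAQs : A * star Q = A * Q := by rw [n2, ← comm]
  have Qstar : star Q = Q := by
    have h : Q = star Q := by
      calc Q = Q * (A * Q) := hQ2.symm
        _ = (Q * A) * Q := by rw [mul_assoc]
        _ = (star Q * A) * Q := by rw [← comm']
        _ = star Q * (A * Q) := by rw [mul_assoc]
        _ = star Q * (A * star Q) := by rw [hAQs]
        _ = star Q * star (Q * A) := by rw [star_mul Q A, sA]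
        _ = star ((Q * A) * Q) := (star_mul (Q * A) Q).symm
        _ = star (Q * (A * Q)) := by rw [mul_assoc]
        _ = star Q := by rw [hQ2]
    exact h.symm
  have hQAA : Q * (A * A) = A := by
    rw [← mul_assoc, ← comm, mul_assoc, hQ1]
  have ha1 : ∀ C : K →L[ℂ] K, P₁ * (P₁ * C) = P₁ * C := fun C => by rw [← mul_assoc, hP₁idem]
  have ha2 : ∀ C : K →L[ℂ] K, P * (P * C) = P * C := fun C => by rw [← mul_assoc, hPidem]
  have hP₂X : (1 - P₁) * X = X := by
    have h2 : (1 - P₁) * (1 - P₁) = 1 - P₁ := by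
      simp only [mul_sub, sub_mul, one_mul, mul_one, hP₁idem]
      abel
    rw [hXdef, ← mul_assoc, h2]
  have hXP₁ : X * P₁ = X := by rw [hXdef]; simp only [mul_assoc, hP₁idem]
  have idXA : X * A = ((1 - P₁) * ((1 - P) * (1 - P₁))) * X := by
    rw [hXdef, hAdef]
    simp only [mul_sub, sub_mul, one_mul, mul_one, mul_assoc, hP₁idem, hPidem, ha1, ha2]
    abel
  have idneg : (1 - P₁) * ((1 - P) * P₁) = -X := by
    rw [hXdef]
    simp only [mul_sub, sub_mul, one_mul, mul_one, mul_assoc, hP₁idem, hPidem, ha1, ha2]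
    abel
  have hXalt : X = (1 - P₁) * ((P - P₁) * P₁) := by
    rw [hXdef]
    simp only [mul_sub, sub_mul, one_mul, mul_one, mul_assoc, hP₁idem, hPidem, ha1, ha2]
    abel
  have hP₁AQ : P₁ * (A * Q) = A * Q := by rw [← mul_assoc, hP₁A]
  have hkerA : A * (P₁ - A * Q) = 0 := by rw [mul_sub, hAP₁, g2, sub_self]
  have hP₁g : P₁ * (P₁ - A * Q) = P₁ - A * Q := by rw [mul_sub, hP₁idem, hP₁AQ]
  -- pointwise: if A x = 0 and P₁ x = x then P x = 0
  have hPker : ∀ x : K, A x = 0 → P₁ x = x → P x = 0 := by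
    intro x hAx hP₁x
    have hAx' : A x = P₁ (P (P₁ x)) := by rw [hAdef]; rfl
    have e1 : (inner ℂ x (A x) : ℂ) = inner ℂ x (P x) := by
      have h := adjoint_inner_right (𝕜 := ℂ) P₁ x (P (P₁ x))
      rw [hadjP₁] at h
      rw [hAx', h, hP₁x]
    have e2 : (inner ℂ (P x) (P x) : ℂ) = inner ℂ x (P x) := by
      have h := adjoint_inner_right (𝕜 := ℂ) P x (P x)
      rw [hadjP] at h
      have pp : P (P x) = P x := DFunLike.congr_fun hPidem x
      rw [pp] at h
      exact h.symm
    have hz : (inner ℂ (P x) (P x) : ℂ) = 0 := by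
      rw [e2, ← e1, hAx, inner_zero_right]
    exact inner_self_eq_zero.mp hz
  have hXkill : X * (P₁ - A * Q) = 0 := by
    ext x
    have h1 : P₁ ((P₁ - A * Q) x) = (P₁ - A * Q) x := DFunLike.congr_fun hP₁g x
    have h2 : A ((P₁ - A * Q) x) = 0 := by
      have h := DFunLike.congr_fun hkerA x
      simpa using h
    have h3 : P ((P₁ - A * Q) x) = 0 := hPker _ h2 h1
    simp only [ContinuousLinearMap.mul_apply, ContinuousLinearMap.zero_apply]
    have hX' : X ((P₁ - A * Q) x) = (1 - P₁) (P (P₁ ((P₁ - A * Q) x))) := by rw [hXdef]; rfl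
    rw [hX', h1, h3, map_zero]
  have hXAQ : X = X * (A * Q) := by
    have h := hXkill
    rw [mul_sub] at h
    have h' := sub_eq_zero.mp h
    rw [hXP₁] at h'
    exact h'
  -- conjugation facts
  have hcA : conjOp J A = (1 - P₁) * ((1 - P) * (1 - P₁)) := by
    rw [hAdef, conjOp_mul J hJ, conjOp_mul J hJ, hP₁conj, hPconj]
  have hRBB : conjOp J Q * (((1 - P₁) * ((1 - P) * (1 - P₁))) * ((1 - P₁) * ((1 - P) * (1 - P₁)))) =
      (1 - P₁) * ((1 - P) * (1 - P₁)) := by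
    rw [← hcA, ← conjOp_mul J hJ, ← conjOp_mul J hJ, hQAA, hcA]
  have hXQ2 : X * Q = ((1 - P₁) * ((1 - P) * (1 - P₁))) * (X * (Q * Q)) := by
    calc X * Q = (X * (A * Q)) * Q := by rw [← hXAQ]
      _ = ((X * A) * Q) * Q := by rw [← mul_assoc]
      _ = ((((1 - P₁) * ((1 - P) * (1 - P₁))) * X) * Q) * Q := by rw [idXA]
      _ = ((1 - P₁) * ((1 - P) * (1 - P₁))) * (X * (Q * Q)) := by simp only [mul_assoc]
  have hRX : conjOp J Q * X = X * Q := by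
    calc conjOp J Q * X = conjOp J Q * (X * (A * Q)) := by rw [← hXAQ]
      _ = conjOp J Q * ((X * A) * Q) := by rw [mul_assoc]
      _ = conjOp J Q * (((((1 - P₁) * ((1 - P) * (1 - P₁)))) * X) * Q) := by rw [idXA]
      _ = conjOp J Q * (((1 - P₁) * ((1 - P) * (1 - P₁))) * (X * Q)) := by rw [mul_assoc]
      _ = conjOp J Q * (((1 - P₁) * ((1 - P) * (1 - P₁))) *
            (((1 - P₁) * ((1 - P) * (1 - P₁))) * (X * (Q * Q)))) := by rw [hXQ2]
      _ = (conjOp J Q * (((1 - P₁) * ((1 - P) * (1 - P₁))) *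
            ((1 - P₁) * ((1 - P) * (1 - P₁))))) * (X * (Q * Q)) := by simp only [mul_assoc]
      _ = ((1 - P₁) * ((1 - P) * (1 - P₁))) * (X * (Q * Q)) := by rw [hRBB]
      _ = X * Q := hXQ2.symm
  refine ⟨?_, ?_, ?_, ?_, ?_, ?_⟩
  · -- finite dimensionality of ker A ⊓ ran P₁
    have hVfix : ∀ x ∈ LinearMap.ker (A : K →ₗ[ℂ] K) ⊓ LinearMap.range (P₁ : K →ₗ[ℂ] K), (P₁ - P) x = x := by
      intro x hx
      obtain ⟨hk, hr⟩ := Submodule.mem_inf.mp hx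
      obtain ⟨y, hy⟩ := LinearMap.mem_range.mp hr
      have hP₁x : P₁ x = x := by
        rw [← hy]
        exact DFunLike.congr_fun hP₁idem y
      have hPx : P x = 0 := hPker x (LinearMap.mem_ker.mp hk) hP₁x
      rw [ContinuousLinearMap.sub_apply, hP₁x, hPx, sub_zero]
    by_contra hnf
    have hrk : LinearMap.range (P₁ : K →ₗ[ℂ] K) = LinearMap.ker ((1 - P₁ : K →L[ℂ] K) : K →ₗ[ℂ] K) := by
      ext x
      simp only [LinearMap.mem_range, LinearMap.mem_ker, ContinuousLinearMap.coe_coe, ContinuousLinearMap.sub_apply,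
        ContinuousLinearMap.one_apply, sub_eq_zero]
      constructor
      · rintro ⟨y, rfl⟩
        exact (DFunLike.congr_fun hP₁idem y).symm
      · intro h
        exact ⟨x, h.symm⟩
    have hVclosed : IsClosed ((LinearMap.ker (A : K →ₗ[ℂ] K) ⊓ LinearMap.range (P₁ : K →ₗ[ℂ] K) : Submodule ℂ K) : Set K) := by
      rw [hrk, Submodule.coe_inf]
      exact (ContinuousLinearMap.isClosed_ker A).inter (ContinuousLinearMap.isClosed_ker (1 - P₁))
    haveI : CompleteSpace ↥(LinearMap.ker (A : K →ₗ[ℂ] K) ⊓ LinearMap.range (P₁ : K →ₗ[ℂ] K)) := hVclosed.completeSpace_coe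
    obtain ⟨w, bV, hbV⟩ := exists_hilbertBasis ℂ ↥(LinearMap.ker (A : K →ₗ[ℂ] K) ⊓ LinearMap.range (P₁ : K →ₗ[ℂ] K))
    rcases Set.finite_or_infinite w with hw | hw
    · haveI := hw.fintype
      subst hAdef
      exact hnf (Module.Finite.of_basis bV.toOrthonormalBasis.toBasis)
    · obtain emb := hw.natEmbedding
      set g : ℕ → K := fun n => ((bV (emb n) : ↥(LinearMap.ker (A : K →ₗ[ℂ] K) ⊓ LinearMap.range (P₁ : K →ₗ[ℂ] K))) : K)
        with hgdef
      clear_value g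
      have hgon : Orthonormal ℂ g := by
        have hcomp := bV.orthonormal.comp emb emb.injective
        rw [orthonormal_iff_ite] at hcomp ⊢
        intro i j
        have h := hcomp i j
        rw [hgdef]
        simp only [Function.comp_apply] at h
        rw [← Submodule.coe_inner] at *
        simpa [emb.injective.eq_iff] using h
      have hginj : Function.Injective g := hgon.linearIndependent.injective
      have hrge : Orthonormal ℂ ((↑) : Set.range g → K) := hgon.toSubtypeRange
      obtain ⟨w', b, hsub, hb⟩ := hrge.exists_hilbertBasis_extension
      have hne := hPHS.eS_ne_top b
      apply hne
      have hmem : ∀ n : ℕ, g n ∈ w' := fun n => hsub ⟨n, rfl⟩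
      have inj2 : Function.Injective (fun n : ℕ => (⟨g n, hmem n⟩ : ↥w')) :=
        fun m n h => hginj (Subtype.ext_iff.mp h)
      have hterm : ∀ n : ℕ,
          ((‖(P₁ - P) (b ⟨g n, hmem n⟩)‖₊ : ENNReal))^2 = 1 := by
        intro n
        have hbn : b ⟨g n, hmem n⟩ = g n := by rw [hb]
        have hfix : (P₁ - P) (g n) = g n := by
          refine hVfix _ ?_
          rw [hgdef]
          exact SetLike.coe_mem _
        have h1 : ‖g n‖ = 1 := hgon.1 n
        have h1' : ‖g n‖₊ = 1 := NNReal.coe_injective (by simp [coe_nnnorm, h1])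
        rw [hbn, hfix, h1']
        simp
      have htop : (⊤ : ENNReal) ≤ eS (P₁ - P) b := by
        calc (⊤ : ENNReal) = ∑' _ : ℕ, (1 : ENNReal) :=
              (ENNReal.tsum_const_eq_top_of_ne_zero one_ne_zero).symm
          _ = ∑' n : ℕ, ((‖(P₁ - P) (b ((fun n : ℕ => (⟨g n, hmem n⟩ : ↥w')) n))‖₊ : ENNReal))^2 :=
              tsum_congr fun n => (hterm n).symm
          _ ≤ eS (P₁ - P) b := ENNReal.tsum_comp_le_tsum_of_injective inj2 _
      exact top_le_iff.mp htop
  · -- closedness of the range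
    have hmapker : Submodule.map (A : K →ₗ[ℂ] K) (LinearMap.range (P₁ : K →ₗ[ℂ] K)) = LinearMap.ker ((1 - A * Q : K →L[ℂ] K) : K →ₗ[ℂ] K) := by
      ext x
      simp only [Submodule.mem_map, LinearMap.mem_range, LinearMap.mem_ker, ContinuousLinearMap.coe_coe,
        ContinuousLinearMap.sub_apply, ContinuousLinearMap.one_apply, sub_eq_zero,
        ContinuousLinearMap.mul_apply]
      constructor
      · rintro ⟨y, ⟨z, rfl⟩, rfl⟩
        exact (DFunLike.congr_fun hQ1 (P₁ z)).symm
      · intro h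
        exact ⟨Q x, ⟨(Q * P₁) x, (DFunLike.congr_fun hQ5 x).symm⟩, h.symm⟩
    have hc := ContinuousLinearMap.isClosed_ker (1 - A * Q)
    rw [← hmapker, hAdef] at hc
    exact hc
  · -- index zero: coker ≅ ker via self-adjointness
    have horth : (LinearMap.range (A : K →ₗ[ℂ] K))ᗮ = LinearMap.ker (A : K →ₗ[ℂ] K) := by
      ext x
      simp only [Submodule.mem_orthogonal, LinearMap.mem_range, LinearMap.mem_ker]
      constructor
      · intro h
        have hx : ∀ y, (inner ℂ (A y) x : ℂ) = 0 := fun y => h (A y) ⟨y, rfl⟩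
        have hx' : ∀ y, (inner ℂ x (A y) : ℂ) = 0 := fun y => by
          rw [← inner_conj_symm, hx y, map_zero]
        have hAA : (inner ℂ (A x) (A x) : ℂ) = 0 := by
          have h' := adjoint_inner_left (𝕜 := ℂ) A (A x) x
          rw [hadjA] at h'
          rw [h', hx']
        exact inner_self_eq_zero.mp hAA
      · intro h u hu
        obtain ⟨y, rfl⟩ := hu
        have h' := adjoint_inner_left (𝕜 := ℂ) A x y
        rw [hadjA] at h'
        change (inner ℂ (A y) x : ℂ) = 0
        rw [h', show A x = 0 from h, inner_zero_right]
    rw [hAdef] at horth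
    exact (congrArg (fun S => Module.rank ℂ ↥(S ⊓ LinearMap.range (P₁ : K →ₗ[ℂ] K))) horth).symm
  · -- support of T
    have h1 : (X * Q) * P₁ = X * Q := by rw [mul_assoc, hQP₁]
    rw [h1, ← mul_assoc, hP₂X]
  · -- antisymmetry
    have hstarX : star X = (P₁ * P) * (1 - P₁) := by
      rw [hXdef, star_mul, star_mul, star_sub, star_one, sP, sP₁]
    have hadjT : ContinuousLinearMap.adjoint (X * Q) = Q * ((P₁ * P) * (1 - P₁)) := by
      rw [← ContinuousLinearMap.star_eq_adjoint, star_mul, Qstar, hstarX]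
    have hc2 : conjOp J (1 - P₁) = P₁ := by
      rw [conjOp_sub, conjOp_one J hJ, hP₁conj, sub_sub_cancel]
    rw [hadjT, conjOp_mul J hJ, conjOp_mul J hJ, conjOp_mul J hJ, hP₁conj, hPconj, hc2,
      mul_assoc, idneg, mul_neg, hRX]
  · -- Hilbert–Schmidt property
    have h6 : IsHS ((P - P₁) ∘L (P₁ * Q)) := (hPHS.neg.congr (neg_sub P₁ P)).comp_right (P₁ * Q)
    refine (h6.comp_left (1 - P₁)).congr ?_
    rw [← ContinuousLinearMap.mul_def, ← ContinuousLinearMap.mul_def]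
    calc (1 - P₁) * ((P - P₁) * (P₁ * Q)) = ((1 - P₁) * ((P - P₁) * P₁)) * Q := by
          simp only [mul_assoc]
      _ = X * Q := by rw [← hXalt]
end

section
/- Let V be a Bogoliubov operator V ∈ 𝕀(K) with basis projection P commuting with VV* (i.e. [P, VV*] = 0). Then S := V*PV is a basis projection (S² = S), and conversely if S² = S then [P, VV*] = 0; moreover in that case dim ker(VV*) restricted to each of P(K) and P̄(K) gives dim(P(K) ∩ ker V*) = -½ ind V. -/
open ContinuousLinearMap
open scoped ComplexInnerProductSpace

/-- A conjugation reverses the inner product. -/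
lemma conj_inner_map {K : Type*} [NormedAddCommGroup K] [InnerProductSpace ℂ K]
    (J : K ≃ₗᵢ⋆[ℂ] K) (x y : K) : ⟪J x, J y⟫ = ⟪y, x⟫ := by
  have hJI : ∀ z : K, J (Complex.I • z) = -(Complex.I • J z) := by
    intro z
    rw [J.map_smulₛₗ]
    simp [Complex.conj_I, neg_smul]
  have h1 : ‖J x + J y‖ = ‖y + x‖ := by
    rw [← map_add, J.norm_map, add_comm]
  have h2 : ‖J x - J y‖ = ‖y - x‖ := by
    rw [← map_sub, J.norm_map, norm_sub_rev]
  have hI : ∀ a b : K, ‖a + Complex.I • b‖ = ‖b - Complex.I • a‖ := by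
    intro a b
    have : Complex.I • (b - Complex.I • a) = a + Complex.I • b := by
      rw [smul_sub, smul_smul, Complex.I_mul_I, neg_one_smul, sub_neg_eq_add, add_comm]
    rw [← this, norm_smul]
    simp
  have h3 : ‖J x - Complex.I • J y‖ = ‖y - Complex.I • x‖ := by
    rw [show J x - Complex.I • J y = J x + J (Complex.I • y) by rw [hJI]; abel,
      ← map_add, J.norm_map, hI]
  have h4 : ‖J x + Complex.I • J y‖ = ‖y + Complex.I • x‖ := by
    rw [show J x + Complex.I • J y = J x - J (Complex.I • y) by rw [hJI]; abel,
      ← map_sub, J.norm_map, ← hI, add_comm]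
  rw [inner_eq_sum_norm_sq_div_four, inner_eq_sum_norm_sq_div_four (𝕜 := ℂ) y x]
  simp only [show (RCLike.I : ℂ) = Complex.I from rfl]
  rw [h1, h2, h3, h4]

/-- `S = V*PV` is a basis projection (idempotent) iff `[P, VV*] = 0`; in that case
`dim (P(K) ∩ ker V*) = -½ ind V`. -/
theorem stmt9 {K : Type*} [NormedAddCommGroup K] [InnerProductSpace ℂ K] [CompleteSpace K]
    (J : K ≃ₗᵢ⋆[ℂ] K) (hJ : ∀ f, J (J f) = f)
    (P : K →L[ℂ] K) (hPsa : IsSelfAdjoint P) (hPidem : P ∘L P = P)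
    (hPconj : conjOp J P = 1 - P)
    (V : K →L[ℂ] K) (hV : adjoint V ∘L V = 1) (hVconj : conjOp J V = V) :
    ((adjoint V ∘L P ∘L V) ∘L (adjoint V ∘L P ∘L V) = adjoint V ∘L P ∘L V ↔
        Commute P (V ∘L adjoint V)) ∧
      ((adjoint V ∘L P ∘L V) ∘L (adjoint V ∘L P ∘L V) = adjoint V ∘L P ∘L V →
        Module.rank ℂ ↥(LinearMap.ker (adjoint V : K →ₗ[ℂ] K)) =
          2 * Module.rank ℂ ↥(LinearMap.range (P : K →ₗ[ℂ] K) ⊓ LinearMap.ker (adjoint V : K →ₗ[ℂ] K))) := by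
  have hmul : ∀ a b : K →L[ℂ] K, a ∘L b = a * b := fun _ _ => rfl
  set W := adjoint V with hWdef
  have hV' : W * V = 1 := hV
  have hPidem' : P * P = P := hPidem
  have hPstar : star P = P := hPsa
  have hVstar : star V = W := rfl
  have hWstar : star W = V := by
    rw [hWdef, ← star_eq_adjoint, star_star]
  have hVWstar : star (V * W) = V * W := by
    rw [star_mul, hWstar, hVstar]
  have hVWidem : (V * W) * (V * W) = V * W := by
    calc (V * W) * (V * W) = V * ((W * V) * W) := by noncomm_ring
    _ = V * W := by rw [hV']; noncomm_ring
  -- the equivalence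
  have hiff : (W ∘L P ∘L V) ∘L (W ∘L P ∘L V) = W ∘L P ∘L V ↔
      P * (V * W) = (V * W) * P := by
    simp only [hmul]
    constructor
    · intro h
      -- Q := 1 - V*W, show Q * (P * V) = 0 first
      have hQQ : (1 - V * W) * (1 - V * W) = 1 - V * W := by
        calc (1 - V * W) * (1 - V * W)
            = 1 - V * W - V * W + (V * W) * (V * W) := by noncomm_ring
          _ = 1 - V * W := by rw [hVWidem]; noncomm_ring
      set T : K →L[ℂ] K := (1 - V * W) * (P * V) with hT
      have hTstar : star T = (W * P) * (1 - V * W) := by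
        rw [hT, star_mul, star_mul, hVstar, hPstar, star_sub, star_one, hVWstar]
      have hTT : star T * T = 0 := by
        have e1 : ((W * P) * (1 - V * W)) * ((1 - V * W) * (P * V)) =
            (W * P) * ((1 - V * W) * (1 - V * W)) * (P * V) := by noncomm_ring
        have e2 : (W * P) * (1 - V * W) * (P * V) =
            W * ((P * P) * V) - (W * (P * V)) * (W * (P * V)) := by noncomm_ring
        rw [hTstar, hT, e1, hQQ, e2, hPidem']
        rw [h]
        simp [mul_assoc]
      have hT0 : T = 0 := by
        have hn : ‖T‖ * ‖T‖ = 0 := by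
          rw [← norm_adjoint_comp_self T, hmul, ← star_eq_adjoint, hTT, norm_zero]
        rw [← norm_eq_zero]
        exact mul_self_eq_zero.mp hn
      have hQPVW : (1 - V * W) * (P * (V * W)) = 0 := by
        calc (1 - V * W) * (P * (V * W)) = ((1 - V * W) * (P * V)) * W := by noncomm_ring
        _ = 0 := by rw [← hT, hT0, zero_mul]
      have e : P * (V * W) = (V * W) * (P * (V * W)) := by
        have : P * (V * W) - (V * W) * (P * (V * W)) = 0 := by
          calc P * (V * W) - (V * W) * (P * (V * W))
              = (1 - V * W) * (P * (V * W)) := by noncomm_ring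
            _ = 0 := hQPVW
        linear_combination (norm := noncomm_ring) this
      have hstarA : star (P * (V * W)) = (V * W) * P := by
        rw [star_mul, hVWstar, hPstar]
      have h2 := congrArg star e
      rw [hstarA] at h2
      rw [star_mul, hstarA, hVWstar] at h2
      have h3 : ((V * W) * P) * (V * W) = (V * W) * (P * (V * W)) := by noncomm_ring
      rw [e, ← h3, ← h2]
    · intro h
      calc (W * (P * V)) * (W * (P * V)) = W * ((P * (V * W)) * (P * V)) := by noncomm_ring
        _ = W * (((V * W) * P) * (P * V)) := by rw [h]
        _ = (W * V) * (W * ((P * P) * V)) := by noncomm_ring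
        _ = W * (P * V) := by rw [hV', hPidem', one_mul]
  constructor
  · exact hiff
  · intro hS
    have hc : P * (V * W) = (V * W) * P := hiff.mp hS
    -- pointwise facts
    have hWV : ∀ x : K, W (V x) = x := fun x => by
      rw [← comp_apply, hV, ContinuousLinearMap.one_apply]
    have hPP : ∀ x : K, P (P x) = P x := fun x => by
      rw [← comp_apply, hPidem]
    have hker : ∀ x : K, W x = 0 → W (P x) = 0 := by
      intro x hx
      have h2 : (V * W) x = 0 := by
        rw [ContinuousLinearMap.mul_apply, hx, map_zero]
      have h1 : (V * W) (P x) = P ((V * W) x) := by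
        have := congrFun (congrArg DFunLike.coe hc) x
        rw [ContinuousLinearMap.mul_apply, ContinuousLinearMap.mul_apply] at this
        exact this.symm
      have h3 : V (W (P x)) = 0 := by
        rw [← ContinuousLinearMap.mul_apply, h1, h2, map_zero]
      have := hWV (W (P x))
      rw [h3, map_zero] at this
      exact this.symm
    have hrange : ∀ x : K, x ∈ LinearMap.range (P : K →ₗ[ℂ] K) ↔ P x = x := by
      intro x
      constructor
      · rintro ⟨y, rfl⟩; exact hPP y
      · intro h; exact ⟨x, h⟩
    -- conjugation facts
    have hJP : ∀ x : K, P (J x) = J x - J (P x) := by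
      intro x
      have h0 : J (P (J x)) = x - P x := by
        have h1 := congrFun (congrArg DFunLike.coe hPconj) x
        simp only [ContinuousLinearMap.sub_apply, ContinuousLinearMap.one_apply] at h1
        exact h1
      have := congrArg J h0
      rw [hJ, map_sub] at this
      rw [this]
    have hJV : ∀ x : K, V (J x) = J (V x) := by
      intro x
      have h0 : J (V (J x)) = V x :=
        congrFun (congrArg DFunLike.coe hVconj) x
      have := congrArg J h0
      rwa [hJ] at this
    have hJW : ∀ x : K, W (J x) = J (W x) := by
      intro x
      apply ext_inner_right ℂ
      intro y
      have hVy : J (V (J y)) = V y := by rw [← hJV, hJ]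
      calc ⟪W (J x), y⟫ = ⟪J x, V y⟫ := adjoint_inner_left V y (J x)
        _ = ⟪J x, J (V (J y))⟫ := by rw [hVy]
        _ = ⟪V (J y), x⟫ := conj_inner_map J x (V (J y))
        _ = ⟪J y, W x⟫ := by rw [hWdef, adjoint_inner_right]
        _ = ⟪J y, J (J (W x))⟫ := by rw [hJ]
        _ = ⟪J (W x), y⟫ := conj_inner_map J y (J (W x))
    set A : Submodule ℂ K := LinearMap.range (P : K →ₗ[ℂ] K) ⊓ LinearMap.ker (W : K →ₗ[ℂ] K) with hA
    set B : Submodule ℂ K := LinearMap.ker (P : K →ₗ[ℂ] K) ⊓ LinearMap.ker (W : K →ₗ[ℂ] K) with hB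
    have hJA : ∀ x : K, x ∈ A → J x ∈ B := by
      intro x hx
      obtain ⟨hx1, hx2⟩ := Submodule.mem_inf.mp hx
      have hPx : P x = x := (hrange x).mp hx1
      have hWx : W x = 0 := LinearMap.mem_ker.mp hx2
      refine Submodule.mem_inf.mpr ⟨LinearMap.mem_ker.mpr ?_, LinearMap.mem_ker.mpr ?_⟩
      · rw [ContinuousLinearMap.coe_coe, hJP, hPx, sub_self]
      · rw [ContinuousLinearMap.coe_coe, hJW, hWx, map_zero]
    have hJB : ∀ x : K, x ∈ B → J x ∈ A := by
      intro x hx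
      obtain ⟨hx1, hx2⟩ := Submodule.mem_inf.mp hx
      have hPx : P x = 0 := LinearMap.mem_ker.mp hx1
      have hWx : W x = 0 := LinearMap.mem_ker.mp hx2
      refine Submodule.mem_inf.mpr ⟨(hrange (J x)).mpr ?_, LinearMap.mem_ker.mpr ?_⟩
      · rw [hJP, hPx, map_zero, sub_zero]
      · rw [ContinuousLinearMap.coe_coe, hJW, hWx, map_zero]
    -- rank A = rank B via the conjugation
    have hrankAB : Module.rank ℂ ↥A = Module.rank ℂ ↥B := by
      refine rank_eq_of_equiv_equiv (M := ↥A) (M₁ := ↥B)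
        (⟨(star : ℂ → ℂ), star_zero ℂ⟩ : ZeroHom ℂ ℂ)
        { toFun := fun x => ⟨J x, hJA x x.2⟩
          invFun := fun y => ⟨J y, hJB y y.2⟩
          left_inv := fun x => Subtype.ext (hJ x)
          right_inv := fun y => Subtype.ext (hJ y)
          map_add' := fun a b => Subtype.ext (by simp) }
        (Function.Involutive.bijective fun z => star_star z) ?_
      intro c m
      refine Subtype.ext ?_
      simp [J.map_smulₛₗ]
    -- the decomposition ker W = A ⊔ B
    have hsup : A ⊔ B = LinearMap.ker (W : K →ₗ[ℂ] K) := by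
      apply le_antisymm
      · exact sup_le inf_le_right inf_le_right
      · intro x hx
        have hWx : W x = 0 := LinearMap.mem_ker.mp hx
        have h1 : P x ∈ A := Submodule.mem_inf.mpr
          ⟨⟨x, rfl⟩, LinearMap.mem_ker.mpr (hker x hWx)⟩
        have h2 : x - P x ∈ B := by
          refine Submodule.mem_inf.mpr ⟨LinearMap.mem_ker.mpr ?_, LinearMap.mem_ker.mpr ?_⟩
          · rw [map_sub, ContinuousLinearMap.coe_coe, hPP, sub_self]
          · rw [map_sub, ContinuousLinearMap.coe_coe, hWx, hker x hWx, sub_self]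
        have h3 : P x + (x - P x) ∈ A ⊔ B := Submodule.add_mem_sup h1 h2
        have h4 : P x + (x - P x) = x := by abel
        rwa [h4] at h3
    have hinf : A ⊓ B = ⊥ := by
      rw [eq_bot_iff]
      intro x hx
      obtain ⟨hxA, hxB⟩ := Submodule.mem_inf.mp hx
      have h1 : P x = x := (hrange x).mp (Submodule.mem_inf.mp hxA).1
      have h2 : P x = 0 := LinearMap.mem_ker.mp (Submodule.mem_inf.mp hxB).1
      have : x = 0 := by rw [← h1, h2]
      simp [this]
    have hsum := Submodule.rank_sup_add_rank_inf_eq A B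
    rw [hsup, hinf, rank_bot, add_zero, ← hrankAB] at hsum
    rw [hsum, two_mul]
end
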